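/- Let E be a real inner product space, let r_t : E → ℝ (for integers t, with r_s ≡ 0 for s ≤ 0) be differentiable functions, and let w ≥ 1, T ≥ 1 be integers, δ ≥ 0, and M ≥ 0. Define u_{w,t}(θ) = (1/w) · Σ_{i=0}^{w-1} r_{t-i}(θ). Suppose ‖∇r_t(θ)‖ ≤ M for all θ ∈ E and all t ≥ 1, and suppose θ_1,…,θ_T ∈ E satisfy ‖∇u_{w,t-1}(θ_t)‖ ≤ δ for every t ∈ {1,…,T}. Then (1/T) · Σ_{t=1}^T ‖∇u_{w,t}(θ_t)‖² ≤ 2δ² + 8M²/w². -/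

import Mathlib

/-!
Consecutive smoothed losses `u_{w,t}` and `u_{w,t-1}` share all but one summand, so
`∇u_{w,t} - ∇u_{w,t-1} = (∇r_t - ∇r_{t-w}) / w` has norm at most `2M/w`. Batch Update stops
when `‖∇u_{w,t-1}(θ_t)‖ ≤ δ`, hence `‖∇u_{w,t}(θ_t)‖ ≤ δ + 2M/w`, and `(a + b)² ≤ 2a² + 2b²`
bounds every term of the average by `2δ² + 8M²/w²`.
-/

open Finset

theorem Finset.one_div_card_mul_sum_le {ι : Type*} {s : Finset ι} {f : ι → ℝ} {c : ℝ}
    (hc : 0 ≤ c) (hf : ∀ i ∈ s, f i ≤ c) : 1 / (#s : ℝ) * ∑ i ∈ s, f i ≤ c :=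
  calc 1 / (#s : ℝ) * ∑ i ∈ s, f i ≤ 1 / (#s : ℝ) * (#s • c) := by
        gcongr
        exact sum_le_card_nsmul s f c hf
    _ = (#s : ℝ) * (#s : ℝ)⁻¹ * c := by rw [nsmul_eq_mul]; ring
    _ ≤ c := mul_le_of_le_one_left hc mul_inv_le_one

theorem Finset.sum_range_sub_sum_range_pred {G : Type*} [AddCommGroup G] (g : ℤ → G) (t : ℤ)
    (w : ℕ) : ∑ i ∈ range w, g (t - i) - ∑ i ∈ range w, g (t - 1 - i) = g t - g (t - w) := by
  rw [← sum_sub_distrib]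
  convert sum_range_sub' (fun i : ℕ => g (t - i)) w using 4 <;> push_cast <;> ring_nf

section SmoothedLoss

variable {E : Type*} [NormedAddCommGroup E] [InnerProductSpace ℝ E] [CompleteSpace E]

theorem gradient_const_mul_sum {ι : Type*} (s : Finset ι) (f : ι → E → ℝ) (c : ℝ) {x : E}
    (hf : ∀ i ∈ s, DifferentiableAt ℝ (f i) x) :
    gradient (fun y => c * ∑ i ∈ s, f i y) x = c • ∑ i ∈ s, gradient (f i) x := by
  simp only [gradient, fderiv_const_mul (DifferentiableAt.fun_sum hf), fderiv_fun_sum hf,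
    map_smul, map_sum]

noncomputable def smoothedLoss (r : ℤ → E → ℝ) (w : ℕ) (t : ℤ) (θ : E) : ℝ :=
  1 / (w : ℝ) * ∑ i ∈ range w, r (t - i) θ

variable {r : ℤ → E → ℝ}

theorem gradient_smoothedLoss (hr : ∀ t, Differentiable ℝ (r t)) (w : ℕ) (t : ℤ) (x : E) :
    gradient (smoothedLoss r w t) x = (1 / (w : ℝ)) • ∑ i ∈ range w, gradient (r (t - i)) x :=
  gradient_const_mul_sum _ _ _ fun _ _ => (hr _).differentiableAt

theorem gradient_smoothedLoss_sub_pred (hr : ∀ t, Differentiable ℝ (r t)) (w : ℕ) (t : ℤ)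
    (x : E) :
    gradient (smoothedLoss r w t) x - gradient (smoothedLoss r w (t - 1)) x
      = (1 / (w : ℝ)) • (gradient (r t) x - gradient (r (t - w)) x) := by
  rw [gradient_smoothedLoss hr, gradient_smoothedLoss hr, ← smul_sub,
    sum_range_sub_sum_range_pred (fun s => gradient (r s) x)]

theorem norm_gradient_smoothedLoss_sub_pred_le (hr : ∀ t, Differentiable ℝ (r t)) {M : ℝ}
    (hM : ∀ s x, ‖gradient (r s) x‖ ≤ M) (w : ℕ) (t : ℤ) (x : E) :
    ‖gradient (smoothedLoss r w t) x - gradient (smoothedLoss r w (t - 1)) x‖ ≤ 2 * M / w := by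
  rw [gradient_smoothedLoss_sub_pred hr, norm_smul, Real.norm_of_nonneg (by positivity)]
  calc 1 / (w : ℝ) * ‖gradient (r t) x - gradient (r (t - w)) x‖ ≤ 1 / w * (M + M) := by
        gcongr
        exact norm_sub_le_of_le (hM _ _) (hM _ _)
    _ = 2 * M / w := by ring

theorem norm_gradient_le_of_eq_zero_of_nonpos (hr0 : ∀ s : ℤ, s ≤ 0 → r s = 0) {M : ℝ}
    (hM : 0 ≤ M) (hgrad : ∀ t : ℤ, 1 ≤ t → ∀ θ : E, ‖gradient (r t) θ‖ ≤ M) (s : ℤ) (x : E) :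
    ‖gradient (r s) x‖ ≤ M := by
  rcases le_or_gt s 0 with hs | hs
  · simpa [hr0 s hs, Pi.zero_def, gradient_fun_const] using hM
  · exact hgrad s hs x

end SmoothedLoss

theorem batch_update_regret_minimax_general
    {E : Type*} [NormedAddCommGroup E] [InnerProductSpace ℝ E] [CompleteSpace E]
    (r : ℤ → E → ℝ) (hrdiff : ∀ t : ℤ, Differentiable ℝ (r t))
    (hr0 : ∀ s : ℤ, s ≤ 0 → r s = 0)
    (w T : ℕ)
    (δ : ℝ) (M : ℝ) (hM : 0 ≤ M)
    (hgrad : ∀ t : ℤ, 1 ≤ t → ∀ θ : E, ‖gradient (r t) θ‖ ≤ M)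
    (u : ℤ → E → ℝ)
    (hu : ∀ (t : ℤ) (θ : E),
      u t θ = (1 / (w : ℝ)) * ∑ i ∈ Finset.range w, r (t - i) θ)
    (θ : ℤ → E)
    (hterm : ∀ t ∈ Finset.Icc (1 : ℤ) (T : ℤ),
      ‖gradient (u (t - 1)) (θ t)‖ ≤ δ) :
    (1 / (T : ℝ)) * ∑ t ∈ Finset.Icc (1 : ℤ) (T : ℤ), ‖gradient (u t) (θ t)‖ ^ 2
      ≤ 2 * δ ^ 2 + 8 * M ^ 2 / (w : ℝ) ^ 2 := by
  obtain rfl : u = smoothedLoss r w := funext fun t => funext (hu t)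
  have hr := norm_gradient_le_of_eq_zero_of_nonpos hr0 hM hgrad
  have hterm_sq : ∀ t ∈ Icc (1 : ℤ) T,
      ‖gradient (smoothedLoss r w t) (θ t)‖ ^ 2 ≤ 2 * δ ^ 2 + 8 * M ^ 2 / (w : ℝ) ^ 2 := by
    intro t ht
    have hstep : ‖gradient (smoothedLoss r w t) (θ t)‖ ≤ δ + 2 * M / w :=
      (norm_le_norm_add_norm_sub' _ _).trans
        (add_le_add (hterm t ht) (norm_gradient_smoothedLoss_sub_pred_le hrdiff hr w t (θ t)))
    calc ‖gradient (smoothedLoss r w t) (θ t)‖ ^ 2 ≤ (δ + 2 * M / w) ^ 2 :=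
          pow_le_pow_left₀ (norm_nonneg _) hstep 2
      _ ≤ 2 * (δ ^ 2 + (2 * M / w) ^ 2) := add_sq_le
      _ = 2 * δ ^ 2 + 8 * M ^ 2 / (w : ℝ) ^ 2 := by ring
  simpa using one_div_card_mul_sum_le (by positivity) hterm_sq

/-- Worst-case corollary of **Proposition 1**: under uniformly bounded gradients,
Batch Update achieves average `w`-local regret at most `2δ² + 8M²/w²`. -/
theorem batch_update_regret_minimax
    {E : Type*} [NormedAddCommGroup E] [InnerProductSpace ℝ E] [CompleteSpace E]
    (r : ℤ → E → ℝ) (hrdiff : ∀ t : ℤ, Differentiable ℝ (r t))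
    (hr0 : ∀ s : ℤ, s ≤ 0 → r s = 0)
    (w T : ℕ) (hw : 1 ≤ w) (hT : 1 ≤ T)
    (δ : ℝ) (hδ : 0 ≤ δ) (M : ℝ) (hM : 0 ≤ M)
    (hgrad : ∀ t : ℤ, 1 ≤ t → ∀ θ : E, ‖gradient (r t) θ‖ ≤ M)
    (u : ℤ → E → ℝ)
    (hu : ∀ (t : ℤ) (θ : E),
      u t θ = (1 / (w : ℝ)) * ∑ i ∈ Finset.range w, r (t - i) θ)
    (θ : ℤ → E)
    (hterm : ∀ t ∈ Finset.Icc (1 : ℤ) (T : ℤ),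
      ‖gradient (u (t - 1)) (θ t)‖ ≤ δ) :
    (1 / (T : ℝ)) * ∑ t ∈ Finset.Icc (1 : ℤ) (T : ℤ), ‖gradient (u t) (θ t)‖ ^ 2
      ≤ 2 * δ ^ 2 + 8 * M ^ 2 / (w : ℝ) ^ 2 :=
  batch_update_regret_minimax_general r hrdiff hr0 w T δ M hM hgrad u hu θ hterm
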